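/- arXiv:2505.02719 — 2 statements merged into one kernel-verified Lean document; each statement's English description precedes it below -/
import Mathlib

section
/- Assume: (P) for every E-controlled set V ⊆ M one has sup_{x∈V} ‖P_x‖_{L(H)} < ∞; (P*) for each x ∈ M there is a bounded linear operator Pr_x : C → C with ι_C ∘ P_x = Pr_x ∘ ι_C, and sup_{x∈V} ‖Pr_x‖_{L(C)} < ∞ for every E-controlled V; (B*) for every K ∈ ℝ the sublevel set {x ∈ M : E(x) ≤ K} is bounded in H; (S) there exist μ : M → (0,∞), a continuous bilinear form Q : H × H → ℝ, and functionals R_x ∈ B* (x ∈ M) with DE_x h = μ(x) Q(x,h) + R_x(ι_B h) for all x ∈ M and h ∈ H, such that on every E-controlled set μ is bounded above and bounded away from 0, there is c > 0 with Q(h,h) ≥ c‖h‖_H² for all h ∈ H, and x ↦ ‖R_x‖_{B*} is bounded on every E-controlled set; (D) there are S_x ∈ B* (x ∈ M) with DE_x((Id_H − P_x)h) = S_x(ι_B h) for all h ∈ H, and x ↦ ‖S_x‖_{B*} is bounded on every E-controlled set; (L*) whenever a sequence (x_k) ⊆ M converges weakly in H to some x_∞ and sup_k F(ι_C x_k) <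 ∞, then x_∞ ∈ M. Then for every θ > 0 the total energy T := E + θ (F ∘ ι_C) satisfies the Palais–Smale condition on M: every sequence (x_k) ⊆ M with sup_k T(x_k) < ∞ and sup{ |DT_{x_k} h| : h ∈ T_{x_k}, ‖h‖_H ≤ 1 } → 0 as k → ∞ has a subsequence converging in the norm of H to a point of M. -/
open Set Filter Bornology
open scoped Topology

noncomputable section

variable {H B C : Type*}
  [NormedAddCommGroup H] [InnerProductSpace ℝ H] [CompleteSpace H]
  [NormedAddCommGroup B] [NormedSpace ℝ B] [CompleteSpace B]
  [NormedAddCommGroup C] [NormedSpace ℝ C] [CompleteSpace C]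

/-- `V ⊆ M` is `E`-controlled: `V` is bounded in `H` and `E` is bounded on `V`. -/
def EControlled (E : H → ℝ) (M V : Set H) : Prop :=
  V ⊆ M ∧ IsBounded V ∧ ∃ Cb : ℝ, ∀ x ∈ V, |E x| ≤ Cb

/-- Weak convergence in the Hilbert space `H`. -/
def WeakTendsto (x : ℕ → H) (xlim : H) : Prop :=
  ∀ y : H, Tendsto (fun k => (inner ℝ y (x k) : ℝ)) atTop (𝓝 (inner ℝ y xlim : ℝ))

/-
A Palais–Smale sequence `x k` of `T = E + θ F ∘ ιC` has `E (x k)` bounded above, because `F ∘ ιC`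
is bounded below on `M`; by (B*) it is bounded, so its range is `E`-controlled and a subsequence
converges weakly to some `z`, which lies in `M` by (L*). The compact embeddings make `ιB (x k)` and
`ιC (x k)` converge in norm. Testing `DT` at `x k` against the tangent vector `P (x k) (x k - z)`
and rewriting with (S), (D) and (P*) writes `μ (x k) * Q (x k - z) (x k - z)` as a sum of five
terms, each tending to zero by the uniform bounds on the controlled set and the weak convergence.
Coercivity of `Q` and `μ ≥ m > 0` then give `x k → z` in norm.
-/

theorem EControlled.mono {X : Type*} [NormedAddCommGroup X] {E : X → ℝ} {M V W : Set X}
    (hW : EControlled E M W) (hVW : V ⊆ W) : EControlled E M V :=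
  let ⟨hWM, hWb, Cb, hCb⟩ := hW
  ⟨hVW.trans hWM, hWb.subset hVW, Cb, fun x hx => hCb x (hVW hx)⟩

theorem eControlled_range_of_le {X : Type*} [NormedAddCommGroup X] {E : X → ℝ} {M : Set X}
    {x : ℕ → X} {e K : ℝ} (hxM : ∀ k, x k ∈ M) (he : ∀ y ∈ M, e ≤ E y)
    (hK : IsBounded {y ∈ M | E y ≤ K}) (hxK : ∀ k, E (x k) ≤ K) : EControlled E M (range x) :=
  ⟨range_subset_iff.2 hxM, hK.subset (range_subset_iff.2 fun k => ⟨hxM k, hxK k⟩),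
    max |e| |K|, forall_mem_range.2 fun k => abs_le_max_abs_abs (he _ (hxM k)) (hxK k)⟩

theorem WeakTendsto.tendsto_apply {x : ℕ → H} {z : H} (hw : WeakTendsto x z)
    (f : StrongDual ℝ H) : Tendsto (fun k => f (x k)) atTop (𝓝 (f z)) := by
  simpa only [InnerProductSpace.toDual_symm_apply] using hw ((InnerProductSpace.toDual ℝ H).symm f)

theorem exists_weakTendsto_subseq {x : ℕ → H} (hx : IsBounded (range x)) :
    ∃ φ : ℕ → ℕ, StrictMono φ ∧ ∃ xlim : H, WeakTendsto (x ∘ φ) xlim := by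
  -- `H` need not be separable: apply sequential Banach–Alaoglu in the closed span `K` of the
  -- sequence, and test against `y : H` through its orthogonal projection onto `K`
  set K := (Submodule.span ℝ (range x)).topologicalClosure
  have : TopologicalSpace.SeparableSpace K :=
    ((countable_range x).isSeparable.span.closure).separableSpace
  have : CompleteSpace K := (Submodule.isClosed_topologicalClosure _).completeSpace_coe
  have hxK (k : ℕ) : x k ∈ K :=
    Submodule.le_topologicalClosure _ (Submodule.subset_span (mem_range_self k))
  obtain ⟨r, hr⟩ := hx.exists_norm_le
  let f : ℕ → WeakDual ℝ K := fun k =>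
    StrongDual.toWeakDual (InnerProductSpace.toDual ℝ K ⟨x k, hxK k⟩)
  have hf (k : ℕ) : f k ∈ WeakDual.toStrongDual ⁻¹' Metric.closedBall 0 r := by
    rw [mem_preimage, StrongDual.toStrongDual_toWeakDual, Metric.mem_closedBall]
    exact ((dist_zero_right _).trans ((InnerProductSpace.toDual ℝ K).norm_map _)).trans_le
      (hr _ (mem_range_self k))
  obtain ⟨g, -, φ, hφ, hfg⟩ := WeakDual.isSeqCompact_closedBall ℝ K 0 r hf
  refine ⟨φ, hφ, (InnerProductSpace.toDual ℝ K).symm g.toStrongDual, fun y => ?_⟩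
  have key := ((WeakDual.eval_continuous (K.orthogonalProjectionOnto y)).tendsto g).comp hfg
  convert key using 1
  · ext k
    simp only [Function.comp_apply, f, StrongDual.toWeakDual_apply,
      InnerProductSpace.toDual_apply_apply]
    rw [Submodule.inner_orthogonalProjectionOnto_eq_of_mem_left, real_inner_comm]
  · rw [real_inner_comm, ← Submodule.inner_orthogonalProjectionOnto_eq_of_mem_left,
      InnerProductSpace.toDual_symm_apply, WeakDual.toStrongDual_apply]

theorem IsCompactOperator.tendsto_of_weakTendsto {X : Type*} [NormedAddCommGroup X]
    [NormedSpace ℝ X] {T : H →L[ℝ] X} (hT : IsCompactOperator T) {x : ℕ → H} {z : H}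
    (hx : IsBounded (range x)) (hw : WeakTendsto x z) :
    Tendsto (fun k => T (x k)) atTop (𝓝 (T z)) := by
  obtain ⟨K, hK, hxK⟩ := hT.image_subset_compact_of_bounded hx
  refine hK.tendsto_nhds_of_unique_mapClusterPt
    (.of_forall fun k => hxK ⟨x k, mem_range_self k, rfl⟩) fun y _ hy => ?_
  -- every cluster point has, under each functional, the weak limit as its value
  refine (SeparatingDual.eq_iff_forall_dual_eq (R := ℝ)).2 fun g => ?_
  exact eq_of_nhds_neBot <|
    ClusterPt.mono (hy.tendsto_comp (g.continuous.tendsto y)) (hw.tendsto_apply (g.comp T))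

theorem tendsto_apply_zero_of_norm_le {ι X Y : Type*} [NormedAddCommGroup X] [NormedSpace ℝ X]
    [NormedAddCommGroup Y] [NormedSpace ℝ Y] {l : Filter ι} {A : ι → X →L[ℝ] Y} {v : ι → X}
    {C : ℝ} (hA : ∀ᶠ i in l, ‖A i‖ ≤ C) (hv : Tendsto v l (𝓝 0)) :
    Tendsto (fun i => A i (v i)) l (𝓝 0) :=
  squeeze_zero_norm' (hA.mono fun i hi => (A i).le_of_opNorm_le hi (v i))
    (by simpa only [norm_zero, mul_zero] using hv.norm.const_mul C)

theorem tendsto_apply_zero_of_small_on_range {V : Type*} [NormedAddCommGroup V]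
    [NormedSpace ℝ V] {f : ℕ → StrongDual ℝ V} {A : ℕ → V →L[ℝ] V}
    (hf : ∀ ε > 0, ∃ N : ℕ, ∀ k ≥ N, ∀ h ∈ range (A k), ‖h‖ ≤ 1 → |f k h| ≤ ε)
    {v : ℕ → V} {C : ℝ} (hv : ∀ k, ‖A k (v k)‖ ≤ C) :
    Tendsto (fun k => f k (A k (v k))) atTop (𝓝 0) := by
  have hC : 0 < C + 1 := by linarith [(norm_nonneg _).trans (hv 0)]
  rw [Metric.tendsto_atTop]
  intro ε hε
  obtain ⟨N, hN⟩ := hf (ε / (2 * (C + 1))) (by positivity)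
  refine ⟨N, fun k hk => ?_⟩
  have hsmall := hN k hk ((C + 1)⁻¹ • A k (v k)) ⟨(C + 1)⁻¹ • v k, map_smul _ _ _⟩ (by
    rw [norm_smul, Real.norm_of_nonneg (inv_nonneg.2 hC.le), inv_mul_le_iff₀ hC]
    linarith [hv k])
  rw [map_smul, smul_eq_mul, abs_mul, abs_of_pos (inv_pos.2 hC), inv_mul_le_iff₀ hC] at hsmall
  rw [Real.dist_0_eq_abs]
  calc |f k (A k (v k))| ≤ (C + 1) * (ε / (2 * (C + 1))) := hsmall
    _ = ε / 2 := by field_simp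
    _ < ε := half_lt_self hε

theorem tendsto_zero_of_coercive {ι V : Type*} [NormedAddCommGroup V] [NormedSpace ℝ V]
    {l : Filter ι} {Q : V →L[ℝ] V →L[ℝ] ℝ} {c : ℝ} (hc : 0 < c) (hQ : ∀ h, c * ‖h‖ ^ 2 ≤ Q h h)
    {a : ι → ℝ} {m : ℝ} (hm : 0 < m) (ha : ∀ i, m ≤ a i) {v : ι → V}
    (hv : Tendsto (fun i => a i * Q (v i) (v i)) l (𝓝 0)) : Tendsto v l (𝓝 0) := by
  have hsq : Tendsto (fun i => ‖v i‖ ^ 2) l (𝓝 0) := by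
    refine squeeze_zero (fun i => by positivity) (fun i => ?_)
      (by simpa only [mul_zero] using hv.const_mul (c * m)⁻¹)
    rw [le_inv_mul_iff₀ (by positivity : 0 < c * m)]
    calc c * m * ‖v i‖ ^ 2 = m * (c * ‖v i‖ ^ 2) := by ring
      _ ≤ a i * Q (v i) (v i) :=
        mul_le_mul (ha i) (hQ (v i)) (by positivity) (hm.le.trans (ha i))
  have := (Real.continuous_sqrt.tendsto 0).comp hsq
  simp only [Function.comp_def, Real.sqrt_sq (norm_nonneg _), Real.sqrt_zero] at this
  exact tendsto_zero_iff_norm_tendsto_zero.2 this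

theorem mul_Q_sub_sub_eq {V X Y : Type*} [NormedAddCommGroup V] [NormedSpace ℝ V]
    [NormedAddCommGroup X] [NormedSpace ℝ X] [NormedAddCommGroup Y] [NormedSpace ℝ Y]
    {D : StrongDual ℝ V} {G : StrongDual ℝ Y} {ιB : V →L[ℝ] X} {ιC : V →L[ℝ] Y}
    {P : V →L[ℝ] V} {Pr : Y →L[ℝ] Y} {Q : V →L[ℝ] V →L[ℝ] ℝ} {R S : StrongDual ℝ X} {μ : ℝ}
    (θ : ℝ) {x : V} (hPr : ∀ h, ιC (P h) = Pr (ιC h))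
    (hsplit : ∀ h, D h = μ * Q x h + R (ιB h)) (hD : ∀ h, D (h - P h) = S (ιB h)) (z : V) :
    μ * Q (x - z) (x - z) =
      (D (P (x - z)) + θ * G (ιC (P (x - z)))) - θ * G (Pr (ιC (x - z)))
        + S (ιB (x - z)) - R (ιB (x - z)) - μ * Q z (x - z) := by
  have hsplit' := hsplit (x - z)
  have hD' := hD (x - z)
  rw [map_sub] at hD'
  rw [hPr, map_sub Q, sub_apply]
  linarith

theorem tendsto_of_weakTendsto_of_palaisSmale {X Y : Type*} [NormedAddCommGroup X]
    [NormedSpace ℝ X] [NormedAddCommGroup Y] [NormedSpace ℝ Y] {E : H → ℝ} {DE : H → H →L[ℝ] ℝ}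
    {DF : Y → Y →L[ℝ] ℝ} {ιB : H →L[ℝ] X} {ιC : H →L[ℝ] Y} {M : Set H} {P : H → H →L[ℝ] H}
    {Pr : H → Y →L[ℝ] Y} {μ : H → ℝ} {Q : H →L[ℝ] H →L[ℝ] ℝ} {R S : H → X →L[ℝ] ℝ} {θ : ℝ}
    (hPr : ∀ x ∈ M, ∀ h : H, ιC (P x h) = Pr x (ιC h))
    (hsplit : ∀ x ∈ M, ∀ h : H, DE x h = μ x * Q x h + R x (ιB h))
    (hD : ∀ x ∈ M, ∀ h : H, DE x (h - P x h) = S x (ιB h))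
    (hQ : ∃ c > 0, ∀ h : H, c * ‖h‖ ^ 2 ≤ Q h h)
    (hP : ∀ V : Set H, EControlled E M V → ∃ Cb : ℝ, ∀ x ∈ V, ‖P x‖ ≤ Cb)
    (hPrBdd : ∀ V : Set H, EControlled E M V → ∃ Cb : ℝ, ∀ x ∈ V, ‖Pr x‖ ≤ Cb)
    (hμ : ∀ V : Set H, EControlled E M V →
      ∃ m M' : ℝ, 0 < m ∧ m ≤ M' ∧ ∀ x ∈ V, m ≤ μ x ∧ μ x ≤ M')
    (hR : ∀ V : Set H, EControlled E M V → ∃ Cb : ℝ, ∀ x ∈ V, ‖R x‖ ≤ Cb)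
    (hS : ∀ V : Set H, EControlled E M V → ∃ Cb : ℝ, ∀ x ∈ V, ‖S x‖ ≤ Cb)
    {x : ℕ → H} {z : H} (hV : EControlled E M (range x)) (hw : WeakTendsto x z)
    (hB : Tendsto (fun k => ιB (x k)) atTop (𝓝 (ιB z)))
    (hC : Tendsto (fun k => ιC (x k)) atTop (𝓝 (ιC z)))
    (hDF : IsBoundedUnder (· ≤ ·) atTop fun k => ‖DF (ιC (x k))‖)
    (hPS : ∀ ε > 0, ∃ N : ℕ, ∀ k ≥ N, ∀ h ∈ range (P (x k)), ‖h‖ ≤ 1 →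
      |DE (x k) h + θ * DF (ιC (x k)) (ιC h)| ≤ ε) :
    Tendsto x atTop (𝓝 z) := by
  have hxV (k : ℕ) : x k ∈ range x := mem_range_self k
  obtain ⟨c, hc, hQc⟩ := hQ
  obtain ⟨CP, hCP⟩ := hP _ hV
  obtain ⟨CPr, hCPr⟩ := hPrBdd _ hV
  obtain ⟨m, m', hm, -, hμb⟩ := hμ _ hV
  obtain ⟨CR, hCR⟩ := hR _ hV
  obtain ⟨CS, hCS⟩ := hS _ hV
  obtain ⟨CDF, hCDF⟩ := hDF
  obtain ⟨r, hr⟩ := hV.2.1.exists_norm_le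
  have hιB : Tendsto (fun k => ιB (x k - z)) atTop (𝓝 0) := by
    simpa only [map_sub, sub_self] using hB.sub_const (ιB z)
  have hιC : Tendsto (fun k => ιC (x k - z)) atTop (𝓝 0) := by
    simpa only [map_sub, sub_self] using hC.sub_const (ιC z)
  have hPS_term : Tendsto (fun k => DE (x k) (P (x k) (x k - z)) +
      θ * DF (ιC (x k)) (ιC (P (x k) (x k - z)))) atTop (𝓝 0) := by
    refine tendsto_apply_zero_of_small_on_range
      (f := fun k => DE (x k) + θ • (DF (ιC (x k))).comp ιC) (C := CP * (r + ‖z‖))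
      (by simpa only [add_apply, smul_apply, ContinuousLinearMap.comp_apply, smul_eq_mul]
        using hPS) fun k => ?_
    have hCP0 : 0 ≤ CP := (norm_nonneg _).trans (hCP _ (hxV k))
    calc ‖P (x k) (x k - z)‖ ≤ CP * ‖x k - z‖ := (P (x k)).le_of_opNorm_le (hCP _ (hxV k)) _
      _ ≤ CP * (r + ‖z‖) := by
        gcongr
        exact (norm_sub_le _ _).trans (by linarith [hr _ (hxV k)])
  have hDF_term :
      Tendsto (fun k => θ * DF (ιC (x k)) (Pr (x k) (ιC (x k - z)))) atTop (𝓝 0) := by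
    simpa only [mul_zero] using (tendsto_apply_zero_of_norm_le hCDF
      (tendsto_apply_zero_of_norm_le (.of_forall fun k => hCPr _ (hxV k)) hιC)).const_mul θ
  have hS_term : Tendsto (fun k => S (x k) (ιB (x k - z))) atTop (𝓝 0) :=
    tendsto_apply_zero_of_norm_le (.of_forall fun k => hCS _ (hxV k)) hιB
  have hR_term : Tendsto (fun k => R (x k) (ιB (x k - z))) atTop (𝓝 0) :=
    tendsto_apply_zero_of_norm_le (.of_forall fun k => hCR _ (hxV k)) hιB
  have hQ_term : Tendsto (fun k => μ (x k) * Q z (x k - z)) atTop (𝓝 0) := by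
    refine bdd_le_mul_tendsto_zero (.of_forall fun k => (hμb _ (hxV k)).1)
      (.of_forall fun k => (hμb _ (hxV k)).2) ?_
    simpa only [map_sub, sub_self] using (hw.tendsto_apply (Q z)).sub_const (Q z z)
  refine tendsto_sub_nhds_zero_iff.1 <|
    tendsto_zero_of_coercive hc hQc hm (fun k => (hμb _ (hxV k)).1) ?_
  have hsum := (((hPS_term.sub hDF_term).add hS_term).sub hR_term).sub hQ_term
  simp only [sub_zero, add_zero] at hsum
  refine hsum.congr fun k => ?_
  have hxM := hV.1 (hxV k)
  exact (mul_Q_sub_sub_eq θ (hPr _ hxM) (hsplit _ hxM) (hD _ hxM) z).symm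

theorem abstract_palais_smale_total_energy_general
    (E : H → ℝ) (DE : H → H →L[ℝ] ℝ) (F : C → ℝ) (DF : C → C →L[ℝ] ℝ)
    (ιB : H →L[ℝ] B) (ιC : H →L[ℝ] C) (O M : Set H) (U : Set C)
    -- compact embeddings and open sets
    (hιB_cpt : IsCompactOperator ιB) (hιC_cpt : IsCompactOperator ιC)
    (hMO : M ⊆ O) (hOU : ιC '' O ⊆ U)
    -- `E` and `F` are continuously Fréchet differentiable
    (hFc : ContinuousOn DF U)
    -- `E` and `F` are bounded below on `M` resp. `ι_C(M)`
    (hElb : ∃ e : ℝ, ∀ x ∈ M, e ≤ E x)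
    (hFlb : ∃ e' : ℝ, ∀ x ∈ M, e' ≤ F (ιC x))
    -- the projectors onto the tangent spaces
    (P : H → H →L[ℝ] H)
    -- (P)
    (hP : ∀ V : Set H, EControlled E M V → ∃ Cb : ℝ, ∀ x ∈ V, ‖P x‖ ≤ Cb)
    -- (P*)
    (Pr : H → C →L[ℝ] C)
    (hPr : ∀ x ∈ M, ∀ h : H, ιC (P x h) = Pr x (ιC h))
    (hPrBdd : ∀ V : Set H, EControlled E M V → ∃ Cb : ℝ, ∀ x ∈ V, ‖Pr x‖ ≤ Cb)
    -- (B*)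
    (hBstar : ∀ K : ℝ, IsBounded {x ∈ M | E x ≤ K})
    -- (S): splitting of the differential
    (μ : H → ℝ) (Q : H →L[ℝ] H →L[ℝ] ℝ) (R : H → B →L[ℝ] ℝ)
    (hsplit : ∀ x ∈ M, ∀ h : H, DE x h = μ x * Q x h + R x (ιB h))
    (hS1 : ∀ V : Set H, EControlled E M V →
      ∃ m M' : ℝ, 0 < m ∧ m ≤ M' ∧ ∀ x ∈ V, m ≤ μ x ∧ μ x ≤ M')
    (hS2 : ∃ c > 0, ∀ h : H, c * ‖h‖ ^ 2 ≤ Q h h)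
    (hS3 : ∀ V : Set H, EControlled E M V → ∃ Cb : ℝ, ∀ x ∈ V, ‖R x‖ ≤ Cb)
    -- (D)
    (S : H → B →L[ℝ] ℝ)
    (hD : ∀ x ∈ M, ∀ h : H, DE x (h - P x h) = S x (ιB h))
    (hDbdd : ∀ V : Set H, EControlled E M V → ∃ Cb : ℝ, ∀ x ∈ V, ‖S x‖ ≤ Cb)
    -- (L*)
    (hLstar : ∀ (x : ℕ → H) (xlim : H), (∀ k, x k ∈ M) → WeakTendsto x xlim →
      (∃ Cb : ℝ, ∀ k, F (ιC (x k)) ≤ Cb) → xlim ∈ M)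
    -- the total energy for `θ > 0`
    (θ : ℝ) (hθ : 0 < θ) :
    ∀ x : ℕ → H, (∀ k, x k ∈ M) →
      (∃ Cb : ℝ, ∀ k, E (x k) + θ * F (ιC (x k)) ≤ Cb) →
      (∀ ε > 0, ∃ N : ℕ, ∀ k ≥ N, ∀ h ∈ Set.range (P (x k)), ‖h‖ ≤ 1 →
        |DE (x k) h + θ * DF (ιC (x k)) (ιC h)| ≤ ε) →
      ∃ (φ : ℕ → ℕ) (xlim : H), StrictMono φ ∧ xlim ∈ M ∧
        Tendsto (x ∘ φ) atTop (𝓝 xlim) := by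
  intro x hxM ⟨T, hT⟩ hPS
  obtain ⟨e, he⟩ := hElb
  obtain ⟨e', he'⟩ := hFlb
  have hEx (k : ℕ) : E (x k) ≤ T - θ * e' := by nlinarith [hT k, he' _ (hxM k)]
  have hFx (k : ℕ) : F (ιC (x k)) ≤ (T - e) / θ := by
    rw [le_div_iff₀ hθ]
    nlinarith [hT k, he _ (hxM k)]
  have hV := eControlled_range_of_le hxM he (hBstar _) hEx
  obtain ⟨φ, hφ, z, hw⟩ := exists_weakTendsto_subseq hV.2.1
  have hVφ : EControlled E M (range (x ∘ φ)) := hV.mono (range_comp_subset_range φ x)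
  have hz : z ∈ M := hLstar _ z (fun k => hxM (φ k)) hw ⟨_, fun k => hFx _⟩
  have hC := hιC_cpt.tendsto_of_weakTendsto hVφ.2.1 hw
  have hDF : Tendsto (fun k => DF (ιC (x (φ k)))) atTop (𝓝 (DF (ιC z))) :=
    (hFc _ (hOU ⟨z, hMO hz, rfl⟩)).tendsto.comp <|
      tendsto_nhdsWithin_iff.2 ⟨hC, .of_forall fun k => hOU ⟨_, hMO (hxM _), rfl⟩⟩
  refine ⟨φ, z, hφ, hz, tendsto_of_weakTendsto_of_palaisSmale (θ := θ) hPr hsplit hD hS2 hP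
    hPrBdd hS1 hS3 hDbdd hVφ hw (hιB_cpt.tendsto_of_weakTendsto hVφ.2.1 hw) hC
    hDF.norm.isBoundedUnder_le fun ε hε => ?_⟩
  exact (hPS ε hε).imp fun N hN k hk => hN (φ k) (hk.trans (hφ.id_le k))

/-- **The Palais–Smale condition for total energies in an abstract setting**:
under (E) (compact embeddings `ι_B : H → B`, `ι_C : H → C`), (P), (P*), (B*), (S)
(with (S1), (S2), (S3)), (D) and (L*), for every `θ > 0` the restriction of the total
energy `T = E + θ (F ∘ ι_C)` to `M` satisfies the Palais–Smale condition. -/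
theorem abstract_palais_smale_total_energy
    (E : H → ℝ) (DE : H → H →L[ℝ] ℝ) (F : C → ℝ) (DF : C → C →L[ℝ] ℝ)
    (ιB : H →L[ℝ] B) (ιC : H →L[ℝ] C) (O M : Set H) (U : Set C)
    -- compact embeddings and open sets
    (hιB_inj : Function.Injective ιB) (hιB_cpt : IsCompactOperator ιB)
    (hιC_inj : Function.Injective ιC) (hιC_cpt : IsCompactOperator ιC)
    (hO : IsOpen O) (hU : IsOpen U) (hMO : M ⊆ O) (hOU : ιC '' O ⊆ U)
    -- `E` and `F` are continuously Fréchet differentiable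
    (hE : ∀ x ∈ O, HasFDerivAt E (DE x) x) (hEc : ContinuousOn DE O)
    (hF : ∀ y ∈ U, HasFDerivAt F (DF y) y) (hFc : ContinuousOn DF U)
    -- `E` and `F` are bounded below on `M` resp. `ι_C(M)`
    (hElb : ∃ e : ℝ, ∀ x ∈ M, e ≤ E x)
    (hFlb : ∃ e' : ℝ, ∀ x ∈ M, e' ≤ F (ιC x))
    -- the projectors onto the tangent spaces
    (P : H → H →L[ℝ] H) (hP_idem : ∀ x ∈ M, ∀ h : H, P x (P x h) = P x h)
    -- (P)
    (hP : ∀ V : Set H, EControlled E M V → ∃ Cb : ℝ, ∀ x ∈ V, ‖P x‖ ≤ Cb)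
    -- (P*)
    (Pr : H → C →L[ℝ] C)
    (hPr : ∀ x ∈ M, ∀ h : H, ιC (P x h) = Pr x (ιC h))
    (hPrBdd : ∀ V : Set H, EControlled E M V → ∃ Cb : ℝ, ∀ x ∈ V, ‖Pr x‖ ≤ Cb)
    -- (B*)
    (hBstar : ∀ K : ℝ, IsBounded {x ∈ M | E x ≤ K})
    -- (S): splitting of the differential
    (μ : H → ℝ) (Q : H →L[ℝ] H →L[ℝ] ℝ) (R : H → B →L[ℝ] ℝ)
    (hμ_pos : ∀ x ∈ M, 0 < μ x)
    (hsplit : ∀ x ∈ M, ∀ h : H, DE x h = μ x * Q x h + R x (ιB h))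
    (hS1 : ∀ V : Set H, EControlled E M V →
      ∃ m M' : ℝ, 0 < m ∧ m ≤ M' ∧ ∀ x ∈ V, m ≤ μ x ∧ μ x ≤ M')
    (hS2 : ∃ c > 0, ∀ h : H, c * ‖h‖ ^ 2 ≤ Q h h)
    (hS3 : ∀ V : Set H, EControlled E M V → ∃ Cb : ℝ, ∀ x ∈ V, ‖R x‖ ≤ Cb)
    -- (D)
    (S : H → B →L[ℝ] ℝ)
    (hD : ∀ x ∈ M, ∀ h : H, DE x (h - P x h) = S x (ιB h))
    (hDbdd : ∀ V : Set H, EControlled E M V → ∃ Cb : ℝ, ∀ x ∈ V, ‖S x‖ ≤ Cb)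
    -- (L*)
    (hLstar : ∀ (x : ℕ → H) (xlim : H), (∀ k, x k ∈ M) → WeakTendsto x xlim →
      (∃ Cb : ℝ, ∀ k, F (ιC (x k)) ≤ Cb) → xlim ∈ M)
    -- the total energy for `θ > 0`
    (θ : ℝ) (hθ : 0 < θ) :
    ∀ x : ℕ → H, (∀ k, x k ∈ M) →
      (∃ Cb : ℝ, ∀ k, E (x k) + θ * F (ιC (x k)) ≤ Cb) →
      (∀ ε > 0, ∃ N : ℕ, ∀ k ≥ N, ∀ h ∈ Set.range (P (x k)), ‖h‖ ≤ 1 →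
        |DE (x k) h + θ * DF (ιC (x k)) (ιC h)| ≤ ε) →
      ∃ (φ : ℕ → ℕ) (xlim : H), StrictMono φ ∧ xlim ∈ M ∧
        Tendsto (x ∘ φ) atTop (𝓝 xlim) :=
  abstract_palais_smale_total_energy_general E DE F DF ιB ιC O M U hιB_cpt hιC_cpt hMO hOU hFc hElb
    hFlb P hP Pr hPr hPrBdd hBstar μ Q R hsplit hS1 hS2 hS3 S hD hDbdd hLstar θ hθ
end
end

section
/- Let s ∈ (0,1), ρ ∈ [1,∞), n ≥ 1, and let f : ℝ/ℤ → ℝⁿ be measurable. Then ∫_{ℝ/ℤ} ∫_{−1/2}^{1/2} ∫₀¹ |f(u+θw) − f(u)|^ρ / |w|^{1+sρ} dθ dw du ≤ ∫_{ℝ/ℤ} ∫_{ℝ/ℤ} |f(u) − f(v)|^ρ / |u−v|_{ℝ/ℤ}^{1+sρ} du dv, as an inequality of values in [0,∞]. -/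
open MeasureTheory Set
open scoped ENNReal

noncomputable section

/-- The intrinsic distance of `u` and `v` on the circle `ℝ/ℤ`. -/
def circDist (u v : ℝ) : ℝ := |Int.fract (u - v + 1/2) - 1/2|

/-!
For fixed `θ ∈ (0,1]`, the substitution `z = θw` turns
`∫_{-1/2}^{1/2} |f(u+θw) - f(u)|^ρ/|w|^{1+sρ} dw` into
`θ^{sρ} ∫_{-θ/2}^{θ/2} |f(u+z) - f(u)|^ρ/|z|^{1+sρ} dz`, which is at most the same integral over
`(-1/2, 1/2]`; averaging over `θ` costs nothing. On that window `|z| = |u - (u+z)|_{ℝ/ℤ}`, so the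
translation `v = u + z` and the periodicity of the integrand in `v` give the Gagliardo integral.
-/

open Function

lemma circDist_add_one_right (u v : ℝ) : circDist u (v + 1) = circDist u v := by
  rw [circDist, circDist, show u - (v + 1) + 1/2 = (u - v + 1/2) - ((1 : ℤ) : ℝ) by push_cast; ring,
    Int.fract_sub_intCast]

lemma circDist_self_add {z : ℝ} (hz : z ∈ Ioc (-(1/2)) (1/2)) (u : ℝ) :
    circDist u (u + z) = |z| := by
  rw [circDist, show u - (u + z) + 1/2 = -z + 1/2 by ring,
    Int.fract_eq_self.2 ⟨by linarith [hz.2], by linarith [hz.1]⟩,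
    show -z + 1/2 - 1/2 = -z by ring, abs_neg]

lemma Function.Periodic.setLIntegral_Ioc_eq {g : ℝ → ℝ≥0∞} {T : ℝ} (hg : Periodic g T)
    (hT : 0 < T) (a b : ℝ) :
    ∫⁻ x in Ioc a (a + T), g x = ∫⁻ x in Ioc b (b + T), g x :=
  (isAddFundamentalDomain_Ioc hT a).setLIntegral_eq (isAddFundamentalDomain_Ioc hT b) g
    hg.map_vadd_zmultiples

lemma setLIntegral_Ioc_comp_add_left (g : ℝ → ℝ≥0∞) (u a b : ℝ) :
    ∫⁻ z in Ioc a b, g (u + z) = ∫⁻ v in Ioc (u + a) (u + b), g v := by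
  rw [(measurePreserving_add_left volume u).setLIntegral_comp_emb
    (measurableEmbedding_addLeft u), image_const_add_Ioc]

lemma setLIntegral_Ioc_comp_mul_left (g : ℝ → ℝ≥0∞) {c : ℝ} (hc : 0 < c) (a b : ℝ) :
    ∫⁻ w in Ioc a b, g (c * w) = ENNReal.ofReal c⁻¹ * ∫⁻ z in Ioc (c * a) (c * b), g z := by
  have hemb : MeasurableEmbedding (c * ·) := (Homeomorph.mulLeft₀ c hc.ne').measurableEmbedding
  have hpre : (c * ·) ⁻¹' Ioc (c * a) (c * b) = Ioc a b := by
    rw [preimage_const_mul_Ioc₀ _ _ hc, mul_div_cancel_left₀ _ hc.ne',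
      mul_div_cancel_left₀ _ hc.ne']
  rw [← hpre, ← hemb.lintegral_map, ← hemb.restrict_map, Real.map_volume_mul_left hc.ne',
    Measure.restrict_smul, lintegral_smul_measure, abs_of_pos (inv_pos.2 hc), smul_eq_mul]

lemma setLIntegral_comp_mul_div_abs_rpow_le (φ : ℝ → ℝ) {r a θ : ℝ} (hr : 0 ≤ r) (ha : 0 ≤ a)
    (hθ : θ ∈ Ioc 0 1) :
    ∫⁻ w in Ioc (-a) a, ENNReal.ofReal (φ (θ * w) / |w| ^ (1 + r)) ≤
      ∫⁻ z in Ioc (-a) a, ENNReal.ofReal (φ z / |z| ^ (1 + r)) := by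
  obtain ⟨hθ0, hθ1⟩ := hθ
  set G : ℝ → ℝ≥0∞ := fun z => ENNReal.ofReal (φ z / |z| ^ (1 + r))
  have hscale : ∀ w, ENNReal.ofReal (φ (θ * w) / |w| ^ (1 + r)) =
      ENNReal.ofReal (θ ^ (1 + r)) * G (θ * w) := fun w => by
    rw [← ENNReal.ofReal_mul (by positivity), abs_mul, abs_of_pos hθ0,
      Real.mul_rpow hθ0.le (abs_nonneg w), ← mul_div_assoc,
      mul_div_mul_left _ _ (Real.rpow_pos_of_pos hθ0 _).ne']
  have hpow : θ ^ (1 + r) * θ⁻¹ = θ ^ r := by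
    rw [Real.rpow_add hθ0, Real.rpow_one]
    field_simp
  calc ∫⁻ w in Ioc (-a) a, ENNReal.ofReal (φ (θ * w) / |w| ^ (1 + r))
      = ENNReal.ofReal (θ ^ (1 + r)) * ∫⁻ w in Ioc (-a) a, G (θ * w) := by
        simp_rw [hscale]
        exact lintegral_const_mul' _ _ ENNReal.ofReal_ne_top
    _ = ENNReal.ofReal (θ ^ r) * ∫⁻ z in Ioc (θ * -a) (θ * a), G z := by
        rw [setLIntegral_Ioc_comp_mul_left G hθ0, ← mul_assoc,
          ← ENNReal.ofReal_mul (by positivity), hpow]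
    _ ≤ 1 * ∫⁻ z in Ioc (-a) a, G z := by
        have hθa : θ * a ≤ a := mul_le_of_le_one_left ha hθ1
        exact mul_le_mul' (ENNReal.ofReal_le_one.2 (Real.rpow_le_one hθ0.le hθ1 hr))
          (lintegral_mono_set (Ioc_subset_Ioc (by linarith) hθa))
    _ = ∫⁻ z in Ioc (-a) a, G z := one_mul _

lemma setLIntegral_lintegral_comp_mul_div_abs_rpow_le {φ : ℝ → ℝ} (hφ : Measurable φ) {r a : ℝ}
    (hr : 0 ≤ r) (ha : 0 ≤ a) :
    ∫⁻ w in Ioc (-a) a, ∫⁻ θ in Ioc (0 : ℝ) 1, ENNReal.ofReal (φ (θ * w) / |w| ^ (1 + r)) ≤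
      ∫⁻ z in Ioc (-a) a, ENNReal.ofReal (φ z / |z| ^ (1 + r)) := by
  rw [lintegral_lintegral_swap (by fun_prop)]
  calc ∫⁻ θ in Ioc (0 : ℝ) 1, ∫⁻ w in Ioc (-a) a, ENNReal.ofReal (φ (θ * w) / |w| ^ (1 + r))
      ≤ ∫⁻ _ in Ioc (0 : ℝ) 1, ∫⁻ z in Ioc (-a) a, ENNReal.ofReal (φ z / |z| ^ (1 + r)) :=
        setLIntegral_mono measurable_const fun θ hθ =>
          setLIntegral_comp_mul_div_abs_rpow_le φ hr ha hθ
    _ = ∫⁻ z in Ioc (-a) a, ENNReal.ofReal (φ z / |z| ^ (1 + r)) := by simp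

lemma setLIntegral_div_abs_rpow_eq_circDist {h : ℝ → ℝ} (hh : Periodic h 1) (u e : ℝ) :
    ∫⁻ z in Ioc (-(1/2)) (1/2), ENNReal.ofReal (h (u + z) / |z| ^ e) =
      ∫⁻ v in Ioc (0 : ℝ) 1, ENNReal.ofReal (h v / circDist u v ^ e) := by
  have hper : Periodic (fun v => ENNReal.ofReal (h v / circDist u v ^ e)) 1 := fun v => by
    simp only [hh v, circDist_add_one_right]
  calc ∫⁻ z in Ioc (-(1/2)) (1/2), ENNReal.ofReal (h (u + z) / |z| ^ e)
      = ∫⁻ z in Ioc (-(1/2)) (1/2), ENNReal.ofReal (h (u + z) / circDist u (u + z) ^ e) :=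
        setLIntegral_congr_fun measurableSet_Ioc fun z hz => by rw [circDist_self_add hz]
    _ = ∫⁻ v in Ioc (u + -(1/2)) (u + -(1/2) + 1), ENNReal.ofReal (h v / circDist u v ^ e) := by
        rw [setLIntegral_Ioc_comp_add_left (fun v => ENNReal.ofReal (h v / circDist u v ^ e)),
          show u + 1/2 = u + -(1/2) + 1 by ring]
    _ = ∫⁻ v in Ioc 0 (0 + 1), ENNReal.ofReal (h v / circDist u v ^ e) :=
        hper.setLIntegral_Ioc_eq one_pos _ _
    _ = ∫⁻ v in Ioc (0 : ℝ) 1, ENNReal.ofReal (h v / circDist u v ^ e) := by rw [zero_add]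

theorem triple_integral_le_gagliardo_general
    (n : ℕ) (s ρ : ℝ) (hs : s ∈ Ioo (0:ℝ) 1) (hρ : 1 ≤ ρ)
    (f : ℝ → EuclideanSpace ℝ (Fin n))
    (hf : Measurable f) (hper : Function.Periodic f 1) :
    (∫⁻ u in Ioc (0:ℝ) 1, ∫⁻ w in Ioc (-(1:ℝ)/2) (1/2), ∫⁻ θ in Ioc (0:ℝ) 1,
        ENNReal.ofReal (‖f (u + θ * w) - f u‖ ^ ρ / |w| ^ (1 + s * ρ))) ≤
      ∫⁻ u in Ioc (0:ℝ) 1, ∫⁻ v in Ioc (0:ℝ) 1,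
        ENNReal.ofReal (‖f u - f v‖ ^ ρ / circDist u v ^ (1 + s * ρ)) := by
  have hsρ : 0 ≤ s * ρ := mul_nonneg hs.1.le (by linarith)
  calc (∫⁻ u in Ioc (0:ℝ) 1, ∫⁻ w in Ioc (-(1:ℝ)/2) (1/2), ∫⁻ θ in Ioc (0:ℝ) 1,
        ENNReal.ofReal (‖f (u + θ * w) - f u‖ ^ ρ / |w| ^ (1 + s * ρ)))
      ≤ ∫⁻ u in Ioc (0:ℝ) 1, ∫⁻ z in Ioc (-(1/2 : ℝ)) (1/2),
          ENNReal.ofReal (‖f (u + z) - f u‖ ^ ρ / |z| ^ (1 + s * ρ)) := by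
        rw [neg_div]
        exact lintegral_mono fun u => setLIntegral_lintegral_comp_mul_div_abs_rpow_le
          (φ := fun z => ‖f (u + z) - f u‖ ^ ρ) (by fun_prop) hsρ (by norm_num)
    _ = ∫⁻ u in Ioc (0:ℝ) 1, ∫⁻ v in Ioc (0:ℝ) 1,
          ENNReal.ofReal (‖f u - f v‖ ^ ρ / circDist u v ^ (1 + s * ρ)) :=
        lintegral_congr fun u => by
          simp only [norm_sub_rev (f u)]
          exact setLIntegral_div_abs_rpow_eq_circDist
            (h := fun v => ‖f v - f u‖ ^ ρ) (fun v => congrArg (‖· - f u‖ ^ ρ) (hper v)) u _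

/-- **Triple integral estimate**: for `s ∈ (0,1)`, `ρ ∈ [1,∞)` and a measurable
`1`-periodic `f : ℝ/ℤ → ℝⁿ`,
`∫∫∫ |f(u+θw) - f(u)|^ρ / |w|^{1+sρ} dθ dw du ≤ ⌊f⌋_{s,ρ}^ρ`,
as an inequality of values in `[0,∞]`. -/
theorem triple_integral_le_gagliardo
    (n : ℕ) (hn : 1 ≤ n) (s ρ : ℝ) (hs : s ∈ Ioo (0:ℝ) 1) (hρ : 1 ≤ ρ)
    (f : ℝ → EuclideanSpace ℝ (Fin n))
    (hf : Measurable f) (hper : Function.Periodic f 1) :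
    (∫⁻ u in Ioc (0:ℝ) 1, ∫⁻ w in Ioc (-(1:ℝ)/2) (1/2), ∫⁻ θ in Ioc (0:ℝ) 1,
        ENNReal.ofReal (‖f (u + θ * w) - f u‖ ^ ρ / |w| ^ (1 + s * ρ))) ≤
      ∫⁻ u in Ioc (0:ℝ) 1, ∫⁻ v in Ioc (0:ℝ) 1,
        ENNReal.ofReal (‖f u - f v‖ ^ ρ / circDist u v ^ (1 + s * ρ)) :=
  triple_integral_le_gagliardo_general n s ρ hs hρ f hf hper

end
end
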